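/- Let $m \geq 3$ and let $\lambda_1, \ldots, \lambda_m$ be real numbers with $(\sum_i \lambda_i)^2 \geq (m-1)\sum_i \lambda_i^2 + (m-1) b$ for some $b \geq S$ where $S \geq 0$. Then for any traceless collection: if $\mu^{(\alpha)}_1,\dots,\mu^{(\alpha)}_m$, $\alpha=1,\dots,k$, satisfy $\sum_i \mu^{(\alpha)}_i = 0$ and $\sum_\alpha \sum_i (\mu_i^{(\alpha)})^2 = S$, then $\sum_\alpha \big[(\sum_i \lambda_i)(\sum_j \lambda_j (\mu_j^{(\alpha)})^2) - (\sum_i \lambda_i \mu_i^{(\alpha)})^2\big] \geq \frac{m b}{2} S \geq \frac{m}{2} S^2$. -/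

import Mathlib

/-!
The left-hand side of each summand equals `½ ∑ᵢ ∑ⱼ λᵢ λⱼ (μᵢ - μⱼ)²`. Chen's lemma bounds every
off-diagonal weight `λᵢ λⱼ` below by `b/2`, and for traceless `μ` one has
`∑ᵢ ∑ⱼ (μᵢ - μⱼ)² = 2m ∑ᵢ μᵢ²`. The second inequality is `S (b - S) ≥ 0`.
-/

open Finset

section

variable {ι : Type*} [Fintype ι]

theorem sum_mul_sum_mul_sq_sub_sq_eq (lam mu : ι → ℝ) :
    (∑ i, lam i) * (∑ j, lam j * mu j ^ 2) - (∑ i, lam i * mu i) ^ 2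
      = (∑ i, ∑ j, lam i * lam j * (mu i - mu j) ^ 2) / 2 := by
  have h : ∀ i j, lam i * lam j * (mu i - mu j) ^ 2
      = lam i * mu i ^ 2 * lam j + lam i * (lam j * mu j ^ 2)
        - 2 * (lam i * mu i) * (lam j * mu j) := fun i j => by ring
  simp only [h, sum_add_distrib, sum_sub_distrib, ← mul_sum, ← sum_mul]
  ring

theorem sum_sum_sub_sq_eq (mu : ι → ℝ) :
    ∑ i, ∑ j, (mu i - mu j) ^ 2 = 2 * Fintype.card ι * ∑ i, mu i ^ 2 - 2 * (∑ i, mu i) ^ 2 := by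
  have h : ∀ i j, (mu i - mu j) ^ 2 = mu i ^ 2 + mu j ^ 2 - 2 * mu i * mu j := fun i j => by ring
  simp only [h, sum_add_distrib, sum_sub_distrib, ← mul_sum, ← sum_mul, sum_const, card_univ,
    nsmul_eq_mul]
  ring

/-- Cauchy–Schwarz for the `card ι - 1` numbers obtained by merging `λᵢ` into `λⱼ`. -/
theorem sq_sum_le_card_sub_one_mul [DecidableEq ι] (lam : ι → ℝ) {i j : ι} (hij : i ≠ j) :
    (∑ x, lam x) ^ 2 ≤ (Fintype.card ι - 1 : ℝ) * (∑ x, lam x ^ 2 + 2 * (lam i * lam j)) := by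
  have hj : j ∈ univ.erase i := mem_erase.mpr ⟨hij.symm, mem_univ j⟩
  set f : ι → ℝ := fun x => lam x + if x = j then lam i else 0
  have hsum : ∑ x ∈ univ.erase i, f x = ∑ x, lam x := by
    rw [sum_add_distrib, sum_ite_eq' _ j, if_pos hj, ← add_sum_erase _ _ (mem_univ i)]
    ring
  have hsq : ∑ x ∈ univ.erase i, f x ^ 2 = ∑ x, lam x ^ 2 + 2 * (lam i * lam j) := by
    have : ∀ x, f x ^ 2 = lam x ^ 2 + if x = j then 2 * lam i * lam j + lam i ^ 2 else 0 := by
      intro x; by_cases h : x = j <;> simp [f, h]; ring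
    rw [sum_congr rfl fun x _ => this x, sum_add_distrib, sum_ite_eq' _ j, if_pos hj,
      ← add_sum_erase _ _ (mem_univ i)]
    ring
  have hcard : ((univ.erase i).card : ℝ) = Fintype.card ι - 1 := by
    rw [card_erase_of_mem (mem_univ i), card_univ, Nat.cast_pred (Fintype.card_pos_iff.mpr ⟨i⟩)]
  have := sq_sum_le_card_mul_sum_sq (s := univ.erase i) (f := f)
  rwa [hsum, hsq, hcard] at this

theorem half_le_mul_of_sq_sum_ge [DecidableEq ι] {lam : ι → ℝ} {b : ℝ}
    (h : (Fintype.card ι - 1 : ℝ) * (∑ x, lam x ^ 2 + b) ≤ (∑ x, lam x) ^ 2)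
    {i j : ι} (hij : i ≠ j) : b / 2 ≤ lam i * lam j := by
  have hcard : (1 : ℝ) < Fintype.card ι := by exact_mod_cast Fintype.one_lt_card_iff.mpr ⟨i, j, hij⟩
  have := (sq_sum_le_card_sub_one_mul lam hij).trans' h
  nlinarith

theorem card_mul_mul_sum_sq_le_of_sum_eq_zero {lam mu : ι → ℝ} {c : ℝ}
    (hc : ∀ i j, i ≠ j → c ≤ lam i * lam j) (hmu : ∑ i, mu i = 0) :
    Fintype.card ι * c * ∑ i, mu i ^ 2
      ≤ (∑ i, lam i) * (∑ j, lam j * mu j ^ 2) - (∑ i, lam i * mu i) ^ 2 := by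
  have hterm : ∀ i j, c * (mu i - mu j) ^ 2 ≤ lam i * lam j * (mu i - mu j) ^ 2 := by
    intro i j
    rcases eq_or_ne i j with rfl | hij
    · simp
    · exact mul_le_mul_of_nonneg_right (hc i j hij) (sq_nonneg _)
  calc Fintype.card ι * c * ∑ i, mu i ^ 2 = (∑ i, ∑ j, c * (mu i - mu j) ^ 2) / 2 := by
        simp only [← mul_sum, sum_sum_sub_sq_eq, hmu]
        ring
    _ ≤ (∑ i, ∑ j, lam i * lam j * (mu i - mu j) ^ 2) / 2 :=
        div_le_div_of_nonneg_right (sum_le_sum fun i _ => sum_le_sum fun j _ => hterm i j)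
          zero_le_two
    _ = _ := (sum_mul_sum_mul_sq_sub_sq_eq lam mu).symm

end

theorem combined_trace_estimate_general (m k : ℕ) (lam : Fin m → ℝ) (b S : ℝ)
    (hS : 0 ≤ S) (hb : b ≥ S)
    (hchen : (∑ i, lam i) ^ 2 ≥ (m - 1 : ℝ) * (∑ i, (lam i) ^ 2) + (m - 1 : ℝ) * b)
    (mu : Fin k → Fin m → ℝ)
    (htraceless : ∀ α, ∑ i, mu α i = 0)
    (hnorm : ∑ α, ∑ i, (mu α i) ^ 2 = S) :
    (∑ α, ((∑ i, lam i) * (∑ j, lam j * (mu α j) ^ 2)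
        - (∑ i, lam i * mu α i) ^ 2)
      ≥ (m : ℝ) * b / 2 * S) ∧
    (m : ℝ) * b / 2 * S ≥ (m : ℝ) / 2 * S ^ 2 := by
  have hpair : ∀ i j, i ≠ j → b / 2 ≤ lam i * lam j := fun i j hij =>
    half_le_mul_of_sq_sum_ge (by rw [Fintype.card_fin]; linarith) hij
  refine ⟨?_, by nlinarith [mul_nonneg hS (sub_nonneg.mpr hb)]⟩
  calc (m : ℝ) * b / 2 * S = ∑ α, (m : ℝ) * (b / 2) * ∑ i, mu α i ^ 2 := by
        rw [← mul_sum, hnorm]; ring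
    _ ≤ _ := sum_le_sum fun α _ => by
        simpa using card_mul_mul_sum_sq_le_of_sum_eq_zero hpair (htraceless α)

/-- Combined algebraic estimate underlying (4.13)/(4.19): Chen's lemma gives
`λᵢ λⱼ ≥ b/2` for `i ≠ j`, and the trace identity then bounds each summand. -/
theorem combined_trace_estimate (m k : ℕ) (hm : 3 ≤ m) (lam : Fin m → ℝ) (b S : ℝ)
    (hS : 0 ≤ S) (hb : b ≥ S)
    (hchen : (∑ i, lam i) ^ 2 ≥ (m - 1 : ℝ) * (∑ i, (lam i) ^ 2) + (m - 1 : ℝ) * b)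
    (mu : Fin k → Fin m → ℝ)
    (htraceless : ∀ α, ∑ i, mu α i = 0)
    (hnorm : ∑ α, ∑ i, (mu α i) ^ 2 = S) :
    (∑ α, ((∑ i, lam i) * (∑ j, lam j * (mu α j) ^ 2)
        - (∑ i, lam i * mu α i) ^ 2)
      ≥ (m : ℝ) * b / 2 * S) ∧
    (m : ℝ) * b / 2 * S ≥ (m : ℝ) / 2 * S ^ 2 :=
  combined_trace_estimate_general m k lam b S hS hb hchen mu htraceless hnorm
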